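/- For a C² curve x : ℝ → ℝ² satisfying m·ẍ = L·K·J·ẋ with unit speed initial data, the (signed) curvature of the trajectory at each time equals (L·K)/(m·v), where v = |ẋ| is the constant speed; i.e., ⟨ẍ(t), J·ẋ(t)⟩/|ẋ(t)|³ = L·K/(m·v) for all t with ẋ(t) ≠ 0. -/

import Mathlib

/-!
Since `ẍ = (L K / m) J ẋ` and `J ẋ ⊥ ẋ`, the speed `|ẋ|` is constant, hence equal to `v`.
As `J` is an isometry, `⟨ẍ, J ẋ⟩ = (L K / m) |ẋ|² = (L K / m) v²`, and dividing by `v³` gives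
`L K / (m v)`.
-/

noncomputable section

/-- Rotation by π/2. -/
def J2 (v : ℝ × ℝ) : ℝ × ℝ := (-v.2, v.1)

/-- Euclidean inner product on ℝ². -/
def dot2 (v w : ℝ × ℝ) : ℝ := v.1 * w.1 + v.2 * w.2

/-- Euclidean norm on ℝ². -/
def enorm2 (v : ℝ × ℝ) : ℝ := Real.sqrt (v.1 ^ 2 + v.2 ^ 2)

lemma dot2_J2_self (v : ℝ × ℝ) : dot2 (J2 v) v = 0 := by
  simp only [dot2, J2]; ring

lemma dot2_J2_J2 (v w : ℝ × ℝ) : dot2 (J2 v) (J2 w) = dot2 v w := by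
  simp only [dot2, J2]; ring

lemma dot2_smul_left (c : ℝ) (v w : ℝ × ℝ) : dot2 (c • v) w = c * dot2 v w := by
  simp only [dot2, Prod.smul_fst, Prod.smul_snd, smul_eq_mul]; ring

lemma enorm2_eq_sqrt_dot2 (v : ℝ × ℝ) : enorm2 v = Real.sqrt (dot2 v v) := by
  simp only [enorm2, dot2, sq]

lemma enorm2_sq (v : ℝ × ℝ) : enorm2 v ^ 2 = dot2 v v := by
  rw [enorm2_eq_sqrt_dot2, Real.sq_sqrt]
  exact add_nonneg (mul_self_nonneg _) (mul_self_nonneg _)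

lemma dot2_smul_J2_J2 (c : ℝ) (v : ℝ × ℝ) : dot2 (c • J2 v) (J2 v) = c * enorm2 v ^ 2 := by
  rw [dot2_smul_left, dot2_J2_J2, enorm2_sq]

lemma HasDerivAt.dot2_self {f : ℝ → ℝ × ℝ} {f' : ℝ × ℝ} {t : ℝ} (hf : HasDerivAt f f' t) :
    HasDerivAt (fun s => dot2 (f s) (f s)) (2 * dot2 f' (f t)) t := by
  have h₁ : HasDerivAt (fun s => (f s).1) f'.1 t :=
    (hasFDerivAt_fst (p := f t)).comp_hasDerivAt t hf
  have h₂ : HasDerivAt (fun s => (f s).2) f'.2 t :=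
    (hasFDerivAt_snd (p := f t)).comp_hasDerivAt t hf
  exact ((h₁.fun_mul h₁).fun_add (h₂.fun_mul h₂)).congr_deriv (by simp only [dot2]; ring)

lemma enorm2_eq_of_hasDerivAt_smul_J2 {f : ℝ → ℝ × ℝ} {c : ℝ}
    (hf : ∀ t, HasDerivAt f (c • J2 (f t)) t) (s t : ℝ) : enorm2 (f s) = enorm2 (f t) := by
  have hconst : ∀ t, HasDerivAt (fun s => dot2 (f s) (f s)) 0 t := fun t => by
    simpa [dot2_smul_left, dot2_J2_self] using (hf t).dot2_self
  simp only [enorm2_eq_sqrt_dot2]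
  congr 1
  exact is_const_of_deriv_eq_zero (fun t => (hconst t).differentiableAt)
    (fun t => (hconst t).deriv) s t

theorem signed_curvature_general (x : ℝ → ℝ × ℝ) (hx : ContDiff ℝ 2 x)
    (m L K : ℝ) (hm : 0 < m)
    (heq : ∀ t, m • deriv (deriv x) t = (L * K) • J2 (deriv x t))
    (v : ℝ) (hv : v = enorm2 (deriv x 0)) :
    ∀ t, deriv x t ≠ 0 →
      dot2 (deriv (deriv x) t) (J2 (deriv x t)) / (enorm2 (deriv x t)) ^ 3
        = L * K / (m * v) := by
  intro t _
  have haccel : ∀ t, deriv (deriv x) t = (L * K / m) • J2 (deriv x t) := fun t => by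
    rw [div_eq_inv_mul, mul_smul, ← heq, inv_smul_smul₀ hm.ne']
  have hvel : Differentiable ℝ (deriv x) := (hx.deriv' (n := 1)).differentiable one_ne_zero
  have hspeed : enorm2 (deriv x t) = v := by
    rw [hv]
    exact enorm2_eq_of_hasDerivAt_smul_J2 (fun t => haccel t ▸ (hvel t).hasDerivAt) t 0
  rw [haccel, dot2_smul_J2_J2, hspeed]
  rcases eq_or_ne v 0 with rfl | hv0
  · simp -- both sides vanish, by `x / 0 = 0`
  · field_simp

/-- For a C² solution of `m ẍ = L K J ẋ`, the signed curvature of the trajectory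
equals `L K / (m v)` where `v = |ẋ(0)|` is the (constant) speed. -/
theorem signed_curvature (x : ℝ → ℝ × ℝ) (hx : ContDiff ℝ 2 x)
    (m L K : ℝ) (hm : 0 < m)
    (heq : ∀ t, m • deriv (deriv x) t = (L * K) • J2 (deriv x t))
    (v : ℝ) (hv : v = enorm2 (deriv x 0)) (hvpos : 0 < v) :
    ∀ t, deriv x t ≠ 0 →
      dot2 (deriv (deriv x) t) (J2 (deriv x t)) / (enorm2 (deriv x t)) ^ 3
        = L * K / (m * v) :=
  signed_curvature_general x hx m L K hm heq v hv
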